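/- Let β be a mixed base and m ≥ 1. Define the Sprague-Grundy function sg of the take-away game Γ(ℕ^m, C_β), where C_β is the set of nonzero C ∈ ℕ^m with ord_β(Σ_i c^i) = min_i ord_β(c^i), by the usual mex recursion: sg(X) = mex{sg(X - C) : C ∈ C_β, X - C ∈ ℕ^m}. Then sg(X) = σ_β(X) = x^0 ⊕ ... ⊕ x^{m-1} for all X ∈ ℕ^m. -/

import Mathlib

/-!
By well-founded induction on positions, `sg` equals `σ_β` as soon as `σ_β` itself satisfies the
mex recursion, i.e. as soon as no legal move preserves `σ_β` and every smaller value is reached.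

A legal move `C` has all components divisible by `β̂_d`, where `d = ord_β (Σ cⁱ)`; it changes
the `d`-th column sum of digits by `Σ cⁱ / β̂_d`, which is not divisible by `β_d`, so it changes
digit `d` of `σ_β`.

For `n < σ_β(X)`, let `d` be the highest digit in which `n` and `σ_β(X)` differ. Lower the
`d`-th digits of the `xⁱ` by a total of `σ_d - n_d`, and in one component `i₀` whose `d`-th digit
drops, overwrite all lower digits so that each lower column sum becomes `n_L`. All components
except `c^{i₀}` are multiples of `β̂_d` and `0 < Σ cⁱ < β̂_{d+1}`, which forces
`ord_β (Σ cⁱ) = min ord_β (cⁱ)`.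
-/

open scoped BigOperators

/-- β̂_L = β_0 ⋯ β_{L-1}, the place value of digit L in mixed base β. -/
def bhat (β : ℕ → ℕ) (L : ℕ) : ℕ := ∏ i ∈ Finset.range L, β i

/-- The L-th digit of n in the mixed base β. -/
def mdigit (β : ℕ → ℕ) (n L : ℕ) : ℕ := n / bhat β L % β L

/-- Digit-wise addition modulo β_L in mixed base β. -/
def moplus (β : ℕ → ℕ) (n h : ℕ) : ℕ :=
  ∑ L ∈ Finset.range (n + h + 1), ((mdigit β n L + mdigit β h L) % β L) * bhat β L

/-- Digit-wise subtraction modulo β_L in mixed base β. -/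
def mominus (β : ℕ → ℕ) (n h : ℕ) : ℕ :=
  ∑ L ∈ Finset.range (n + h + 1), ((β L + mdigit β n L - mdigit β h L) % β L) * bhat β L

/-- σ_β(X) = x^0 ⊕ ⋯ ⊕ x^{m-1}: the digit-wise Nim sum in mixed base β. -/
def msigma (β : ℕ → ℕ) {m : ℕ} (X : Fin m → ℕ) : ℕ :=
  ∑ L ∈ Finset.range (∑ i, X i + 1), ((∑ i, mdigit β (X i) L) % β L) * bhat β L

/-- Hamming weight: number of nonzero components. -/
def hamwt {m : ℕ} (C : Fin m → ℕ) : ℕ := (Finset.univ.filter (fun i => C i ≠ 0)).card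

/-- ord_β(n): the largest L with β̂_L ∣ n (⊤ for n = 0). -/
def mord (β : ℕ → ℕ) (n : ℕ) : ℕ∞ :=
  if n = 0 then ⊤ else (Nat.findGreatest (fun L => bhat β L ∣ n) n : ℕ∞)

/-- 𝒞 is a Sprague-Grundy system of σ_β: its members are nonzero moves and
σ_β satisfies the mex recursion of the take-away game Γ(ℕ^m, 𝒞), i.e. σ_β is the
Sprague-Grundy function of that game. -/
def IsSGSystem (β : ℕ → ℕ) {m : ℕ} (𝒞 : Set (Fin m → ℕ)) : Prop :=
  (∀ C ∈ 𝒞, C ≠ 0) ∧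
  ∀ X : Fin m → ℕ, msigma β X =
    sInf {n : ℕ | ∀ C ∈ 𝒞, (∀ i, C i ≤ X i) → msigma β (fun i => X i - C i) ≠ n}

open Finset

section Digits

variable {β : ℕ → ℕ}

lemma bhat_succ (β : ℕ → ℕ) (L : ℕ) : bhat β (L + 1) = bhat β L * β L :=
  prod_range_succ β L

lemma bhat_dvd_bhat (β : ℕ → ℕ) {L M : ℕ} (h : L ≤ M) : bhat β L ∣ bhat β M :=
  prod_dvd_prod_of_subset _ _ _ (range_subset_range.2 h)

lemma mdigit_eq_zero_of_lt {n L : ℕ} (h : n < bhat β L) : mdigit β n L = 0 := by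
  simp [mdigit, Nat.div_eq_of_lt h]

lemma mdigit_eq_mod_div (n L : ℕ) : mdigit β n L = n % bhat β (L + 1) / bhat β L := by
  rw [bhat_succ, Nat.mod_mul_right_div_self]; rfl

lemma div_bhat_eq_mul_add_mdigit (x d : ℕ) :
    x / bhat β d = x / bhat β (d + 1) * β d + mdigit β x d := by
  rw [bhat_succ, ← Nat.div_div_eq_div_mul, mdigit, Nat.div_add_mod']

lemma mdigit_eq_of_modEq {x y L M : ℕ} (hLM : L < M) (h : x ≡ y [MOD bhat β M]) :
    mdigit β x L = mdigit β y L := by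
  rw [mdigit_eq_mod_div, mdigit_eq_mod_div, h.of_dvd (bhat_dvd_bhat β hLM)]

lemma mdigit_eq_of_div_eq {x y L M : ℕ} (hML : M ≤ L) (h : x / bhat β M = y / bhat β M) :
    mdigit β x L = mdigit β y L := by
  obtain ⟨c, hc⟩ := bhat_dvd_bhat β hML
  simp only [mdigit, hc, ← Nat.div_div_eq_div_mul, h]

lemma sum_mul_bhat_lt {c : ℕ → ℕ} {k : ℕ} (hc : ∀ L < k, c L < β L) :
    ∑ L ∈ range k, c L * bhat β L < bhat β k := by
  induction k with
  | zero => simp [bhat]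
  | succ k ih =>
    have hlow := ih fun L hL => hc L (by omega)
    have htop : (c k + 1) * bhat β k ≤ β k * bhat β k :=
      Nat.mul_le_mul_right _ (hc k k.lt_succ_self)
    rw [sum_range_succ, bhat_succ]
    nlinarith

variable (hβ : ∀ L, 2 ≤ β L)
include hβ

lemma bhat_pos (L : ℕ) : 0 < bhat β L :=
  prod_pos fun i _ => by have := hβ i; omega

lemma lt_bhat_self (L : ℕ) : L < bhat β L :=
  calc L < 2 ^ L := Nat.lt_two_pow_self
    _ ≤ bhat β L := by simpa [bhat] using pow_card_le_prod (range L) β 2 fun i _ => hβ i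

lemma mdigit_lt (n L : ℕ) : mdigit β n L < β L :=
  Nat.mod_lt _ (by have := hβ L; omega)

lemma eq_of_mdigit_eq {x y : ℕ} (h : ∀ L, mdigit β x L = mdigit β y L) : x = y := by
  have hmod : ∀ k, x % bhat β k = y % bhat β k := by
    intro k
    induction k with
    | zero => simp [bhat, Nat.mod_one]
    | succ k ih =>
      have hk := h k
      unfold mdigit at hk
      rw [bhat_succ, Nat.mod_mul, Nat.mod_mul, ih, hk]
  have := lt_bhat_self hβ (x + y)
  calc x = x % bhat β (x + y) := (Nat.mod_eq_of_lt (by omega)).symm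
    _ = y % bhat β (x + y) := hmod _
    _ = y := Nat.mod_eq_of_lt (by omega)

lemma mdigit_sum_mul_bhat {c : ℕ → ℕ} {k L : ℕ} (hc : ∀ L < k, c L < β L) (hL : L < k) :
    mdigit β (∑ L ∈ range k, c L * bhat β L) L = c L := by
  induction k with
  | zero => omega
  | succ k ih =>
    have hck : ∀ L < k, c L < β L := fun L hL => hc L (by omega)
    rw [sum_range_succ]
    rcases Nat.lt_succ_iff_lt_or_eq.1 hL with hL | rfl
    · rw [mdigit_eq_of_modEq hL (Nat.add_mul_mod_self_right _ _ _), ih hck hL]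
    · rw [mdigit, Nat.add_mul_div_right _ _ (bhat_pos hβ L),
        Nat.div_eq_of_lt (sum_mul_bhat_lt hck), zero_add, Nat.mod_eq_of_lt (hc L hL)]

lemma mdigit_msigma {m : ℕ} (X : Fin m → ℕ) (L : ℕ) :
    mdigit β (msigma β X) L = (∑ i, mdigit β (X i) L) % β L := by
  have hc : ∀ L, (∑ i, mdigit β (X i) L) % β L < β L :=
    fun L => Nat.mod_lt _ (by have := hβ L; omega)
  by_cases hL : L < ∑ i, X i + 1
  · exact mdigit_sum_mul_bhat hβ (fun L _ => hc L) hL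
  · have hX : ∀ i, mdigit β (X i) L = 0 := fun i => by
      have := single_le_sum (fun j _ => Nat.zero_le (X j)) (mem_univ i)
      have := lt_bhat_self hβ L
      exact mdigit_eq_zero_of_lt (by omega)
    have hσ : msigma β X < bhat β L :=
      (sum_mul_bhat_lt fun L _ => hc L).trans_le
        (Nat.le_of_dvd (bhat_pos hβ L) (bhat_dvd_bhat β (by omega)))
    simp [mdigit_eq_zero_of_lt hσ, hX]

lemma exists_bhat_dvd_not_dvd_succ {n : ℕ} (hn : n ≠ 0) :
    ∃ d, bhat β d ∣ n ∧ ¬ bhat β (d + 1) ∣ n := by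
  by_contra! h
  have hdvd : ∀ d, bhat β d ∣ n := fun d => by
    induction d with
    | zero => simp [bhat]
    | succ d ih => exact h d ih
  exact absurd (Nat.le_of_dvd (Nat.pos_of_ne_zero hn) (hdvd n)) (not_le.2 (lt_bhat_self hβ n))

lemma exists_div_eq_mdigit_lt {n s : ℕ} (h : n < s) :
    ∃ d, n / bhat β (d + 1) = s / bhat β (d + 1) ∧ mdigit β n d < mdigit β s d := by
  classical
  set P : ℕ → Prop := fun L => n / bhat β L < s / bhat β L
  set d := Nat.findGreatest P s
  have hd : n / bhat β d < s / bhat β d :=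
    Nat.findGreatest_spec (P := P) (m := 0) (Nat.zero_le s) (by simpa [P, bhat] using h)
  have heq : n / bhat β (d + 1) = s / bhat β (d + 1) := by
    refine le_antisymm (Nat.div_le_div_right h.le) (not_lt.1 fun hlt => ?_)
    by_cases hds : d + 1 ≤ s
    · exact Nat.findGreatest_is_greatest (P := P) d.lt_succ_self hds hlt
    · have := lt_bhat_self hβ (d + 1)
      simp [Nat.div_eq_of_lt (show s < bhat β (d + 1) by omega)] at hlt
  refine ⟨d, heq, ?_⟩
  rw [div_bhat_eq_mul_add_mdigit, div_bhat_eq_mul_add_mdigit (x := s), heq] at hd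
  omega

end Digits

section Moves

variable {β : ℕ → ℕ} (hβ : ∀ L, 2 ≤ β L)
include hβ

lemma coe_le_mord_iff {n L : ℕ} : (L : ℕ∞) ≤ mord β n ↔ bhat β L ∣ n := by
  unfold mord
  split_ifs with hn
  · simp [hn]
  · rw [Nat.cast_le]
    constructor
    · intro hL
      exact (bhat_dvd_bhat β hL).trans
        (Nat.findGreatest_spec (P := fun L => bhat β L ∣ n) (m := 0) (Nat.zero_le n)
          (by simp [bhat]))
    · intro hL
      have := Nat.le_of_dvd (Nat.pos_of_ne_zero hn) hL
      have := lt_bhat_self hβ L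
      exact Nat.le_findGreatest (by omega) hL

lemma mord_sum_eq_iInf_iff {m : ℕ} (C : Fin m → ℕ) :
    mord β (∑ i, C i) = ⨅ i, mord β (C i) ↔
      ∀ L, bhat β L ∣ ∑ i, C i → ∀ i, bhat β L ∣ C i := by
  have hinf : ∀ L : ℕ, (L : ℕ∞) ≤ ⨅ i, mord β (C i) ↔ ∀ i, bhat β L ∣ C i := by
    simp [le_iInf_iff, coe_le_mord_iff hβ]
  constructor
  · intro h L hL
    rw [← hinf, ← h, coe_le_mord_iff hβ]
    exact hL
  · intro h
    refine ENat.eq_of_forall_natCast_le_iff fun L => ?_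
    rw [hinf, coe_le_mord_iff hβ]
    exact ⟨h L, fun hC => dvd_sum fun i _ => hC i⟩

lemma mord_sum_eq_iInf_of_lt {m d : ℕ} {C : Fin m → ℕ} (i₀ : Fin m)
    (hC : ∀ i ≠ i₀, bhat β d ∣ C i) (hpos : 0 < ∑ i, C i) (hlt : ∑ i, C i < bhat β (d + 1)) :
    mord β (∑ i, C i) = ⨅ i, mord β (C i) := by
  classical
  refine (mord_sum_eq_iInf_iff hβ C).2 fun L hL => ?_
  have hLd : L ≤ d := by
    by_contra! h
    exact absurd (Nat.le_of_dvd hpos ((bhat_dvd_bhat β h).trans hL)) (not_le.2 hlt)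
  have hrest : ∀ i ≠ i₀, bhat β L ∣ C i := fun i hi => (bhat_dvd_bhat β hLd).trans (hC i hi)
  intro i
  by_cases hi : i = i₀
  · subst hi
    rw [← add_sum_erase _ _ (mem_univ i)] at hL
    exact (Nat.dvd_add_left (dvd_sum fun j hj => hrest j (ne_of_mem_erase hj))).1 hL
  · exact hrest i hi

lemma mdigit_msigma_add {m d : ℕ} (Y C : Fin m → ℕ) (hC : ∀ i, bhat β d ∣ C i) :
    mdigit β (msigma β (Y + C)) d =
      (mdigit β (msigma β Y) d + ∑ i, C i / bhat β d) % β d := by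
  rw [mdigit_msigma hβ, mdigit_msigma hβ]
  simp only [Pi.add_apply, mdigit, Nat.add_div_of_dvd_left (hC _)]
  rw [← sum_nat_mod, sum_add_distrib, ← sum_nat_mod, Nat.mod_add_mod]

lemma msigma_sub_ne {m : ℕ} {X C : Fin m → ℕ} (hC0 : C ≠ 0)
    (hord : mord β (∑ i, C i) = ⨅ i, mord β (C i)) (hle : ∀ i, C i ≤ X i) :
    msigma β (fun i => X i - C i) ≠ msigma β X := by
  have hsum : ∑ i, C i ≠ 0 := fun h =>
    hC0 (funext fun i => (sum_eq_zero_iff.1 h) i (mem_univ i))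
  obtain ⟨d, hd, hnd⟩ := exists_bhat_dvd_not_dvd_succ hβ hsum
  have hCd := (mord_sum_eq_iInf_iff hβ C).1 hord d hd
  intro heq
  have hdig := mdigit_msigma_add hβ (fun i => X i - C i) C hCd
  rw [show (fun i => X i - C i) + C = X from funext fun i => Nat.sub_add_cancel (hle i), heq]
    at hdig
  have hq : β d ∣ ∑ i, C i / bhat β d := by
    refine Nat.modEq_zero_iff_dvd.1 (Nat.ModEq.add_left_cancel' (mdigit β (msigma β X) d) ?_)
    rw [Nat.ModEq, add_zero, Nat.mod_eq_of_lt (mdigit_lt hβ _ d)]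
    exact hdig.symm
  have hCsum : ∑ i, C i = (∑ i, C i / bhat β d) * bhat β d := by
    rw [sum_mul]
    exact sum_congr rfl fun i _ => (Nat.div_mul_cancel (hCd i)).symm
  apply hnd
  rw [hCsum, bhat_succ, mul_comm (bhat β d)]
  exact Nat.mul_dvd_mul_right hq _

end Moves

/-- `x` with its digit `d` replaced by `g` and its digits below `d` by those of `r`. -/
def splice (β : ℕ → ℕ) (x d g r : ℕ) : ℕ := (x / bhat β (d + 1) * β d + g) * bhat β d + r

section Splice

variable {β : ℕ → ℕ} (hβ : ∀ L, 2 ≤ β L) {x d g r : ℕ}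
include hβ

lemma splice_div_bhat (hr : r < bhat β d) :
    splice β x d g r / bhat β d = x / bhat β (d + 1) * β d + g := by
  rw [splice, add_comm, Nat.add_mul_div_right _ _ (bhat_pos hβ d), Nat.div_eq_of_lt hr, zero_add]

lemma mdigit_splice_self (hg : g < β d) (hr : r < bhat β d) :
    mdigit β (splice β x d g r) d = g := by
  rw [mdigit, splice_div_bhat hβ hr, Nat.mul_add_mod', Nat.mod_eq_of_lt hg]

lemma mdigit_splice_of_lt {L : ℕ} (hL : d < L) (hg : g < β d) (hr : r < bhat β d) :
    mdigit β (splice β x d g r) L = mdigit β x L := by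
  refine mdigit_eq_of_div_eq hL ?_
  rw [bhat_succ, ← Nat.div_div_eq_div_mul, splice_div_bhat hβ hr, add_comm,
    Nat.add_mul_div_right _ _ (by have := hβ d; omega), Nat.div_eq_of_lt hg, zero_add,
    bhat_succ]

omit hβ in
lemma mdigit_splice_of_gt {L : ℕ} (hL : L < d) : mdigit β (splice β x d g r) L = mdigit β r L :=
  mdigit_eq_of_modEq hL (Nat.mul_add_mod' _ _ _)

omit hβ in
lemma splice_add (hg : g ≤ mdigit β x d) :
    splice β x d g r + (mdigit β x d - g) * bhat β d + x % bhat β d = x + r := by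
  have hx : x = (x / bhat β (d + 1) * β d + mdigit β x d) * bhat β d + x % bhat β d := by
    rw [← div_bhat_eq_mul_add_mdigit, Nat.div_add_mod']
  generalize mdigit β x d = f at hx hg
  obtain ⟨δ, rfl⟩ := Nat.exists_eq_add_of_le hg
  conv_rhs => rw [hx]
  rw [splice, Nat.add_sub_cancel_left]
  ring

lemma msigma_splice {m n : ℕ} {X g r : Fin m → ℕ} (hg : ∀ i, g i < β d) (hr : ∀ i, r i < bhat β d)
    (hlow : ∀ L < d, (∑ i, mdigit β (r i) L) % β L = mdigit β n L)
    (hmid : (∑ i, g i) % β d = mdigit β n d)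
    (hhigh : n / bhat β (d + 1) = msigma β X / bhat β (d + 1)) :
    msigma β (fun i => splice β (X i) d (g i) (r i)) = n := by
  refine eq_of_mdigit_eq hβ fun L => ?_
  rw [mdigit_msigma hβ]
  rcases lt_trichotomy L d with hL | rfl | hL
  · simp only [mdigit_splice_of_gt hL]
    exact hlow L hL
  · simp only [mdigit_splice_self hβ (hg _) (hr _)]
    exact hmid
  · simp only [mdigit_splice_of_lt hβ hL (hg _) (hr _)]
    rw [← mdigit_msigma hβ]
    exact mdigit_eq_of_div_eq hL hhigh.symm

end Splice

lemma exists_le_sum_add_eq {ι : Type*} [Fintype ι] (f : ι → ℕ) {K : ℕ} (hK : K ≤ ∑ i, f i) :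
    ∃ g ≤ f, ∑ i, g i + K = ∑ i, f i := by
  classical
  induction K with
  | zero => exact ⟨f, le_rfl, rfl⟩
  | succ K ih =>
    obtain ⟨g, hgf, hg⟩ := ih (by omega)
    obtain ⟨j, -, hj⟩ := exists_ne_zero_of_sum_ne_zero (s := univ) (f := g) (by omega)
    refine ⟨Function.update g j (g j - 1), fun i => ?_, ?_⟩
    · rcases eq_or_ne i j with rfl | hij
      · simpa using (Nat.sub_le _ _).trans (hgf i)
      · simpa [hij] using hgf i
    · rw [sum_update_of_mem (mem_univ j), ← hg, ← add_sum_erase _ _ (mem_univ j),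
        sdiff_singleton_eq_erase]
      omega

lemma exists_lt_add_mod_eq (a : ℕ) {n k : ℕ} (hn : n < k) : ∃ z < k, (a + z) % k = n := by
  obtain ⟨k, rfl⟩ : ∃ k', k = k' + 1 := ⟨k - 1, by omega⟩
  refine ⟨(n + k * a) % (k + 1), Nat.mod_lt _ k.succ_pos, ?_⟩
  rw [Nat.add_mod_mod, show a + (n + k * a) = n + (k + 1) * a by ring,
    Nat.add_mul_mod_self_left, Nat.mod_eq_of_lt hn]

/-- The move set `C_β`. -/
def ordMoves (β : ℕ → ℕ) (m : ℕ) : Set (Fin m → ℕ) :=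
  {C | C ≠ 0 ∧ mord β (∑ i, C i) = ⨅ i, mord β (C i)}

section Game

variable {β : ℕ → ℕ} (hβ : ∀ L, 2 ≤ β L)
include hβ

lemma splice_le_and_sub_splice_mem_ordMoves {m d K : ℕ} {X g r : Fin m → ℕ} (i₀ : Fin m)
    (hgf : ∀ i, g i ≤ mdigit β (X i) d) (hi₀ : g i₀ < mdigit β (X i₀) d)
    (hgK : ∑ i, g i + K = ∑ i, mdigit β (X i) d) (hKβ : K < β d)
    (hr : ∀ i ≠ i₀, r i = X i % bhat β d) (hr₀ : r i₀ < bhat β d) :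
    (∀ i, splice β (X i) d (g i) (r i) ≤ X i) ∧
      (fun i => X i - splice β (X i) d (g i) (r i)) ∈ ordMoves β m := by
  classical
  set Y : Fin m → ℕ := fun i => splice β (X i) d (g i) (r i)
  have hYX : ∀ i, Y i ≤ X i ∧ X i - Y i + (if i = i₀ then r i₀ else 0) =
      (mdigit β (X i) d - g i) * bhat β d + (if i = i₀ then X i₀ % bhat β d else 0) := by
    intro i
    have hmove : Y i + (mdigit β (X i) d - g i) * bhat β d + X i % bhat β d = X i + r i :=
      splice_add (hgf i)
    by_cases hi : i = i₀
    · subst hi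
      have hb : bhat β d ≤ (mdigit β (X i) d - g i) * bhat β d :=
        Nat.le_mul_of_pos_left _ (by omega)
      simp only [↓reduceIte]
      omega
    · simp only [hr i hi] at hmove
      simp only [hi, ↓reduceIte]
      omega
  have hsum : ∑ i, (X i - Y i) + r i₀ = K * bhat β d + X i₀ % bhat β d := by
    have := sum_congr rfl fun i (_ : i ∈ univ) => (hYX i).2
    simp only [sum_add_distrib, sum_ite_eq', mem_univ, if_true, ← sum_mul] at this
    rw [this, sum_tsub_distrib univ fun i _ => hgf i]
    congr 2
    omega
  have hK : 0 < K := by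
    have := sum_lt_sum (fun i (_ : i ∈ univ) => hgf i) ⟨i₀, mem_univ i₀, hi₀⟩
    omega
  have hKb : bhat β d ≤ K * bhat β d := Nat.le_mul_of_pos_left _ hK
  have hKβb : (K + 1) * bhat β d ≤ β d * bhat β d := Nat.mul_le_mul_right _ hKβ
  have hR : X i₀ % bhat β d < bhat β d := Nat.mod_lt _ (bhat_pos hβ d)
  have hpos : 0 < ∑ i, (X i - Y i) := by omega
  refine ⟨fun i => (hYX i).1, fun h0 => hpos.ne' (by simpa using congrArg (fun C => ∑ i, C i) h0),
    mord_sum_eq_iInf_of_lt hβ (d := d) i₀ (fun i hi => ?_) hpos ?_⟩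
  · exact Dvd.intro_left _ (by simpa [hi] using ((hYX i).2).symm)
  · rw [bhat_succ, mul_comm]
    nlinarith

lemma exists_mem_ordMoves_msigma_eq {m n : ℕ} (X : Fin m → ℕ) (hn : n < msigma β X) :
    ∃ C ∈ ordMoves β m, (∀ i, C i ≤ X i) ∧ msigma β (fun i => X i - C i) = n := by
  classical
  obtain ⟨d, hhigh, hdig⟩ := exists_div_eq_mdigit_lt hβ hn
  set b := bhat β d
  set f : Fin m → ℕ := fun i => mdigit β (X i) d
  set K := mdigit β (msigma β X) d - mdigit β n d
  have hsd : mdigit β (msigma β X) d = (∑ i, f i) % β d := mdigit_msigma hβ X d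
  have hKβ : K < β d := by have := mdigit_lt hβ (msigma β X) d; omega
  obtain ⟨g, hgf, hgK⟩ :=
    exists_le_sum_add_eq f (K := K) (by have := Nat.mod_le (∑ i, f i) (β d); omega)
  obtain ⟨i₀, hi₀⟩ : ∃ i₀, g i₀ < f i₀ := by
    by_contra! h
    have := sum_le_sum fun i (_ : i ∈ univ) => h i
    omega
  choose z hzβ hz using fun L =>
    exists_lt_add_mod_eq (∑ i ∈ univ.erase i₀, mdigit β (X i) L) (mdigit_lt hβ n L)
  set Z := ∑ L ∈ range d, z L * bhat β L
  have hZ : Z < b := sum_mul_bhat_lt fun L _ => hzβ L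
  set r : Fin m → ℕ := fun i => if i = i₀ then Z else X i % b
  set Y : Fin m → ℕ := fun i => splice β (X i) d (g i) (r i)
  obtain ⟨hYX, hmove⟩ := splice_le_and_sub_splice_mem_ordMoves hβ i₀ hgf hi₀ hgK hKβ
    (fun i hi => if_neg hi) (by simpa [r] using hZ)
  refine ⟨_, hmove, fun i => Nat.sub_le _ _, ?_⟩
  rw [show (fun i => X i - (X i - Y i)) = Y from funext fun i => Nat.sub_sub_self (hYX i)]
  refine msigma_splice hβ (fun i => (hgf i).trans_lt (mdigit_lt hβ _ d)) (fun i => ?_)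
    (fun L hL => ?_) ?_ hhigh
  · by_cases hi : i = i₀
    · simpa [r, hi] using hZ
    · simpa [r, hi] using Nat.mod_lt (X i) (bhat_pos hβ d)
  · rw [← add_sum_erase _ _ (mem_univ i₀), ← hz L, add_comm]
    congr 2
    · refine sum_congr rfl fun i hi => ?_
      simpa [r, ne_of_mem_erase hi] using mdigit_eq_of_modEq hL (Nat.mod_modEq (X i) b)
    · simpa [r] using mdigit_sum_mul_bhat hβ (fun L _ => hzβ L) hL
  · have := Nat.div_add_mod (∑ i, f i) (β d)
    have hn_d : ∑ i, g i = β d * ((∑ i, f i) / β d) + mdigit β n d := by omega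
    rw [hn_d, Nat.mul_add_mod, Nat.mod_eq_of_lt (mdigit_lt hβ n d)]

end Game

theorem isSGSystem_ordMoves {β : ℕ → ℕ} (hβ : ∀ L, 2 ≤ β L) {m : ℕ} :
    IsSGSystem β (ordMoves β m) := by
  refine ⟨fun C hC => hC.1, fun X => (IsLeast.csInf_eq ⟨?_, fun n hn => ?_⟩).symm⟩
  · rintro C ⟨hC0, hord⟩ hle
    exact msigma_sub_ne hβ hC0 hord hle
  · by_contra! hlt
    obtain ⟨C, hC, hle, hCn⟩ := exists_mem_ordMoves_msigma_eq hβ X hlt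
    exact hn C hC hle hCn

lemma eq_of_mex_recursion {m : ℕ} {𝒞 : Set (Fin m → ℕ)} (h𝒞 : ∀ C ∈ 𝒞, C ≠ 0)
    {f g : (Fin m → ℕ) → ℕ}
    (hf : ∀ X, f X = sInf {n | ∀ C ∈ 𝒞, (∀ i, C i ≤ X i) → f (fun i => X i - C i) ≠ n})
    (hg : ∀ X, g X = sInf {n | ∀ C ∈ 𝒞, (∀ i, C i ≤ X i) → g (fun i => X i - C i) ≠ n}) :
    f = g := by
  funext X
  induction X using WellFoundedLT.induction with
  | _ X ih =>
    rw [hf, hg]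
    congr 1
    ext n
    refine forall₂_congr fun C hC => forall_congr' fun hle => ?_
    obtain ⟨i, hi⟩ := Function.ne_iff.1 (h𝒞 C hC)
    have hCi : 0 < C i := Nat.pos_of_ne_zero hi
    rw [ih _ (Pi.lt_def.2 ⟨fun j => Nat.sub_le _ _, i, Nat.sub_lt (hCi.trans_le (hle i)) hCi⟩)]

theorem stmt4_general (β : ℕ → ℕ) (hβ : ∀ L, 2 ≤ β L) {m : ℕ}
    (sg : (Fin m → ℕ) → ℕ)
    (hsg : ∀ X : Fin m → ℕ, sg X =
      sInf {n : ℕ | ∀ C : Fin m → ℕ, C ≠ 0 →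
        mord β (∑ i, C i) = (⨅ i, mord β (C i)) →
        (∀ i, C i ≤ X i) → sg (fun i => X i - C i) ≠ n}) :
    ∀ X : Fin m → ℕ, sg X = msigma β X := by
  have hσ := isSGSystem_ordMoves hβ (m := m)
  refine congrFun (eq_of_mex_recursion hσ.1 (fun X => ?_) hσ.2)
  simp only [hsg X, ordMoves, Set.mem_ofPred_eq, and_imp]

/-- The Sprague-Grundy function of the take-away game Γ(ℕ^m, 𝒞_β) is σ_β. -/
theorem stmt4 (β : ℕ → ℕ) (hβ : ∀ L, 2 ≤ β L) {m : ℕ} (hm : 1 ≤ m)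
    (sg : (Fin m → ℕ) → ℕ)
    (hsg : ∀ X : Fin m → ℕ, sg X =
      sInf {n : ℕ | ∀ C : Fin m → ℕ, C ≠ 0 →
        mord β (∑ i, C i) = (⨅ i, mord β (C i)) →
        (∀ i, C i ≤ X i) → sg (fun i => X i - C i) ≠ n}) :
    ∀ X : Fin m → ℕ, sg X = msigma β X :=
  stmt4_general β hβ sg hsg
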